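/- Fix γ > 0, 0 < t ≤ T, and let φ be as above. Then for all (s,x) ∈ [t,T]×[0,∞) and all z ∈ ℝ^d, one has −γ·φ_x(s,x)·|z| + (1/2)·φ_{xx}(s,x)·|z|² + φ_s(s,x) ≥ 0. -/

import Mathlib

noncomputable def phi (γ t s x : ℝ) : ℝ :=
  (x + Real.exp 1) *
    Real.exp (γ * Real.sqrt (2 * s * Real.log (x + Real.exp 1)) +
      γ / 2 * (γ * (s - t) + 2 * Real.sqrt 2 * (Real.sqrt s - Real.sqrt t)))

noncomputable def phix (γ t s x : ℝ) : ℝ :=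
  phi γ t s x * ((γ * Real.sqrt s + Real.sqrt (2 * Real.log (x + Real.exp 1))) /
    ((x + Real.exp 1) * Real.sqrt (2 * Real.log (x + Real.exp 1))))

noncomputable def phixx (γ t s x : ℝ) : ℝ :=
  phi γ t s x * (γ * Real.sqrt s *
      (2 * Real.log (x + Real.exp 1) + γ * Real.sqrt (2 * s * Real.log (x + Real.exp 1)) - 1) /
    ((x + Real.exp 1) ^ 2 * Real.sqrt (2 * Real.log (x + Real.exp 1)) ^ 3))

noncomputable def phis (γ t s x : ℝ) : ℝ :=
  γ * phi γ t s x / 2 *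
    ((Real.sqrt (2 * Real.log (x + Real.exp 1)) + Real.sqrt 2) / Real.sqrt s + γ)

/-!
Completing the square in `u = ‖z‖` reduces the claim to the discriminant bound
`γ² φ_x² ≤ 2 φ_xx φ_s` (with `φ_xx > 0`). Writing `R = √(2 log (x + e)) ≥ √2` and `S = √s`, both sides
share the factor `γ² φ² / ((x + e)² R³)`, and what is left is the polynomial inequality
`(γS + R)² R ≤ (R² + γSR - 1)(R + √2 + γS)`, whose two sides differ by `(√2 R - 1)(R + γS) - √2 ≥ 0`.
-/

lemma nonneg_of_sq_le_two_mul {a b c : ℝ} (hb : 0 < b) (h : a ^ 2 ≤ 2 * b * c) (u : ℝ) :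
    0 ≤ -a * u + b / 2 * u ^ 2 + c := by
  have hb_mul : 0 ≤ b * (-a * u + b / 2 * u ^ 2 + c) := by
    nlinarith [sq_nonneg (b * u - a)]
  exact nonneg_of_mul_nonneg_right (by linarith) hb

lemma add_sq_mul_le_of_sqrt_two_le {a R : ℝ} (ha : 0 ≤ a) (hR : √2 ≤ R) :
    (a + R) ^ 2 * R ≤ (R ^ 2 + a * R - 1) * (R + √2 + a) := by
  have hR0 : 0 ≤ R := (Real.sqrt_nonneg 2).trans hR
  have hR2 : 2 ≤ √2 * R := by
    simpa using mul_le_mul_of_nonneg_left hR (Real.sqrt_nonneg 2)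
  nlinarith [mul_le_mul_of_nonneg_left hR2 hR0,
    mul_le_mul_of_nonneg_left hR2 ha]

lemma sq_mul_le_two_mul_mul_of_sqrt_two_le {γ P E S R : ℝ} (hγ : 0 < γ) (hE : 0 < E) (hS : 0 < S)
    (hR : √2 ≤ R) :
    (γ * (P * ((γ * S + R) / (E * R)))) ^ 2 ≤
      2 * (P * (γ * S * (R ^ 2 + γ * S * R - 1) / (E ^ 2 * R ^ 3))) *
        (γ * P / 2 * ((R + √2) / S + γ)) := by
  have hR0 : 0 < R := (Real.sqrt_pos.2 two_pos).trans_le hR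
  have hdiff : 2 * (P * (γ * S * (R ^ 2 + γ * S * R - 1) / (E ^ 2 * R ^ 3))) *
        (γ * P / 2 * ((R + √2) / S + γ)) - (γ * (P * ((γ * S + R) / (E * R)))) ^ 2 =
      (γ * P) ^ 2 / (E ^ 2 * R ^ 3) *
        ((R ^ 2 + γ * S * R - 1) * (R + √2 + γ * S) - (γ * S + R) ^ 2 * R) := by
    field_simp
  have hpoly := add_sq_mul_le_of_sqrt_two_le (mul_pos hγ hS).le hR
  rw [← sub_nonneg, hdiff]
  exact mul_nonneg (by positivity) (sub_nonneg.2 hpoly)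

section Phi

variable {γ t s x : ℝ}

lemma one_le_log_add_exp_one (hx : 0 ≤ x) : 1 ≤ Real.log (x + Real.exp 1) := by
  simpa using Real.log_le_log (Real.exp_pos 1) (le_add_of_nonneg_left hx)

lemma sqrt_two_le_sqrt_two_mul_log_add_exp_one (hx : 0 ≤ x) :
    √2 ≤ √(2 * Real.log (x + Real.exp 1)) :=
  Real.sqrt_le_sqrt (by linarith [one_le_log_add_exp_one hx])

lemma phi_pos (hx : 0 ≤ x) : 0 < phi γ t s x := by
  unfold phi
  positivity

lemma phixx_eq (hs : 0 ≤ s) (hx : 0 ≤ x) :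
    phixx γ t s x = phi γ t s x *
      (γ * √s * (√(2 * Real.log (x + Real.exp 1)) ^ 2 +
          γ * √s * √(2 * Real.log (x + Real.exp 1)) - 1) /
        ((x + Real.exp 1) ^ 2 * √(2 * Real.log (x + Real.exp 1)) ^ 3)) := by
  have hlog : 0 ≤ 2 * Real.log (x + Real.exp 1) := by linarith [one_le_log_add_exp_one hx]
  rw [phixx, Real.sq_sqrt hlog, mul_assoc 2 s, mul_left_comm 2 s, Real.sqrt_mul hs]
  ring

lemma phixx_pos (hγ : 0 < γ) (hs : 0 < s) (hx : 0 ≤ x) : 0 < phixx γ t s x := by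
  have hR := sqrt_two_le_sqrt_two_mul_log_add_exp_one hx
  have hR0 : 0 < √(2 * Real.log (x + Real.exp 1)) := (Real.sqrt_pos.2 two_pos).trans_le hR
  have hR2 : 2 ≤ √(2 * Real.log (x + Real.exp 1)) ^ 2 := by
    simpa using pow_le_pow_left₀ (Real.sqrt_nonneg 2) hR 2
  have hγS : 0 < γ * √s := mul_pos hγ (Real.sqrt_pos.2 hs)
  have hfactor : 0 < √(2 * Real.log (x + Real.exp 1)) ^ 2 +
      γ * √s * √(2 * Real.log (x + Real.exp 1)) - 1 := by
    nlinarith [mul_pos hγS hR0]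
  rw [phixx_eq hs.le hx]
  exact mul_pos (phi_pos hx) (div_pos (mul_pos hγS hfactor) (by positivity))

lemma sq_mul_phix_le_two_mul_phixx_mul_phis (hγ : 0 < γ) (hs : 0 < s) (hx : 0 ≤ x) :
    (γ * phix γ t s x) ^ 2 ≤ 2 * phixx γ t s x * phis γ t s x := by
  rw [phixx_eq hs.le hx, phix, phis]
  exact sq_mul_le_two_mul_mul_of_sqrt_two_le hγ (by positivity) (Real.sqrt_pos.2 hs)
    (sqrt_two_le_sqrt_two_mul_log_add_exp_one hx)

end Phi

theorem phi_differential_inequality_general (d : ℕ) (γ t T s x : ℝ) (hγ : 0 < γ)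
    (ht : 0 < t) (hs : s ∈ Set.Icc t T) (hx : 0 ≤ x)
    (z : EuclideanSpace ℝ (Fin d)) :
    0 ≤ -γ * phix γ t s x * ‖z‖ + 1 / 2 * phixx γ t s x * ‖z‖ ^ 2 + phis γ t s x := by
  have hs0 : 0 < s := ht.trans_le hs.1
  have key := sq_mul_phix_le_two_mul_phixx_mul_phis (t := t) hγ hs0 hx
  have h := nonneg_of_sq_le_two_mul (phixx_pos hγ hs0 hx) key ‖z‖
  linarith

/-- For `γ > 0`, `0 < t ≤ T`, `(s,x) ∈ [t,T]×[0,∞)` and every `z ∈ ℝ^d`: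
`−γ·φ_x·|z| + (1/2)·φ_{xx}·|z|² + φ_s ≥ 0`. -/
theorem phi_differential_inequality (d : ℕ) (hd : 0 < d) (γ t T s x : ℝ) (hγ : 0 < γ)
    (ht : 0 < t) (htT : t ≤ T) (hs : s ∈ Set.Icc t T) (hx : 0 ≤ x)
    (z : EuclideanSpace ℝ (Fin d)) :
    0 ≤ -γ * phix γ t s x * ‖z‖ + 1 / 2 * phixx γ t s x * ‖z‖ ^ 2 + phis γ t s x :=
  phi_differential_inequality_general d γ t T s x hγ ht hs hx z
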